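/- arXiv:1702.03627 — 4 statements merged into one kernel-verified Lean document; each statement's English description precedes it below -/
import Mathlib

section
/- In an action profile on a social network, if buyer i diffuses the auction information to a set r_i' of her neighbors and the set of buyers having i as a diffusion critical node (together with i itself) is d_i', and if she instead diffuses to a superset r_i'' ⊇ r_i' yielding set d_i'', then d_i' ⊆ d_i''. (Monotonicity of the diffusion-dependent set in the diffusion action.) -/
/-- A diffusion path from the seller `s` to agent `j`: a nonempty list starting at `s`,
ending at `j`, in which each agent passes the information to the next one
(i.e. the next agent belongs to the diffusion set of the previous one). -/
def IsDiffPath {N : Type} (σ : N → Finset N) (s j : N) (p : List N) : Prop :=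
  p ≠ [] ∧ p.head? = some s ∧ p.getLast? = some j ∧ List.Chain' (fun a b => b ∈ σ a) p

/-- Agent `j` is informed if some diffusion path from the seller reaches her. -/
def Informed {N : Type} (σ : N → Finset N) (s j : N) : Prop :=
  ∃ p, IsDiffPath σ s j p

/-- Buyer `i` is a diffusion critical node of buyer `j`: `j` is informed and every
diffusion path from the seller `s` to `j` passes through `i` (and `i ≠ j`). -/
def Critical {N : Type} (σ : N → Finset N) (s i j : N) : Prop :=
  i ≠ j ∧ Informed σ s j ∧ ∀ p, IsDiffPath σ s j p → i ∈ p

/-- `d_i`: buyer `i` together with all buyers having `i` as a diffusion critical node. -/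
def dset {N : Type} (σ : N → Finset N) (s i : N) : Set N :=
  {i} ∪ {j | Critical σ s i j}

/-!
Enlarging `i`'s own diffusion set keeps every old diffusion path, so informed buyers stay
informed, and the only new paths use an edge leaving `i`, so they pass through `i`. Hence a
path to `j` avoiding `i` after the change already existed before it, and `i` stays critical
for `j`.
-/

open Function

section Monotonicity

variable {N : Type} {σ₁ σ₂ : N → Finset N} {s i j : N}

theorem IsDiffPath.mono (hle : σ₁ ≤ σ₂) {p : List N} (hp : IsDiffPath σ₁ s j p) :
    IsDiffPath σ₂ s j p :=
  ⟨hp.1, hp.2.1, hp.2.2.1, hp.2.2.2.imp fun a _ hab => hle a hab⟩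

theorem IsDiffPath.of_eqOn_compl (hσ : Set.EqOn σ₁ σ₂ {i}ᶜ) {p : List N} (hi : i ∉ p)
    (hp : IsDiffPath σ₂ s j p) : IsDiffPath σ₁ s j p :=
  ⟨hp.1, hp.2.1, hp.2.2.1, hp.2.2.2.imp_of_mem_imp fun _ _ ha _ hab =>
    hσ (ne_of_mem_of_not_mem ha hi) ▸ hab⟩

theorem Critical.mono_of_eqOn_compl (hle : σ₁ ≤ σ₂) (hσ : Set.EqOn σ₁ σ₂ {i}ᶜ)
    (hc : Critical σ₁ s i j) : Critical σ₂ s i j := by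
  obtain ⟨hij, ⟨p, hp⟩, hthrough⟩ := hc
  refine ⟨hij, ⟨p, hp.mono hle⟩, fun q hq => ?_⟩
  by_contra hi
  exact hi (hthrough q (hq.of_eqOn_compl hσ hi))

theorem dset_mono_of_eqOn_compl (hle : σ₁ ≤ σ₂) (hσ : Set.EqOn σ₁ σ₂ {i}ᶜ) :
    dset σ₁ s i ⊆ dset σ₂ s i :=
  Set.union_subset_union_right _ fun _ => Critical.mono_of_eqOn_compl hle hσ

end Monotonicity

/-- fixing the diffusion choices of everyone else, if buyer `i`
diffuses to a set `r'` of neighbors and instead to a superset `r'' ⊇ r'`,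
then the corresponding dependent sets satisfy `d_i' ⊆ d_i''`. -/
theorem dset_monotone_in_diffusion {N : Type} [DecidableEq N]
    (σ : N → Finset N) (s i : N) (r' r'' : Finset N) (h : r' ⊆ r'') :
    dset (Function.update σ i r') s i ⊆ dset (Function.update σ i r'') s i :=
  dset_mono_of_eqOn_compl (update_le_update_iff'.2 h) fun _ ha => by
    rw [update_of_ne ha, update_of_ne ha]
end

section
/- Given a fixed action profile in which all informed agents' diffusion choices are fixed, for any informed buyer j, the set of diffusion critical nodes of j together with j itself is totally ordered by the relation d_x ⊃ d_y (strict reverse inclusion of the corresponding dependent sets); i.e., for any two distinct diffusion critical nodes x, y of j, either d_x ⊃ d_y or d_y ⊃ d_x. -/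
/-! Cut a diffusion path to `j` at the last visit of `x`. If `y` occurs after this point, then
`x` is critical for `y`: any path to `y`, spliced onto the rest of the cut path, reaches `j` and
must meet `x` before `y`. Otherwise `y` is critical for `x` by the same splicing. Finally, `x`
critical for `y` forces `d_y ⊂ d_x` because criticality is transitive and asymmetric. -/

theorem List.eq_append_cons_last_of_mem {α : Type*} {a : α} {l : List α} (h : a ∈ l) :
    ∃ s t, l = s ++ a :: t ∧ a ∉ t := by
  obtain ⟨s, t, hl, ha⟩ := List.eq_append_cons_of_mem (List.mem_reverse.2 h)
  exact ⟨t.reverse, s.reverse, by simpa using congrArg List.reverse hl, by simpa using ha⟩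

namespace IsDiffPath

variable {N : Type} {σ : N → Finset N} {s j x : N} {a b q : List N}

theorem truncate (hp : IsDiffPath σ s j (a ++ x :: b)) : IsDiffPath σ s x (a ++ [x]) := by
  obtain ⟨-, hs, -, hc⟩ := hp
  refine ⟨by simp, ?_, by simp, hc.prefix ⟨b, by simp⟩⟩
  cases a <;> simpa using hs

theorem splice (hp : IsDiffPath σ s j (a ++ x :: b)) (hq : IsDiffPath σ s x q) :
    IsDiffPath σ s j (q ++ b) := by
  obtain ⟨-, -, hpj, hpc⟩ := hp
  obtain ⟨hq0, hqs, hqx, hqc⟩ := hq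
  refine ⟨by simp [hq0], ?_, ?_, ?_⟩
  · cases q <;> simp_all
  · simp_all [List.getLast?_append, List.getLast?_cons]
  · obtain ⟨hxb, hb⟩ := List.isChain_cons.1 (hpc.suffix ⟨a, rfl⟩)
    exact List.isChain_append.2 ⟨hqc, hb, by simpa [hqx] using hxb⟩

end IsDiffPath

namespace Critical

variable {N : Type} {σ : N → Finset N} {s x y z : N}

theorem asymm (hxy : Critical σ s x y) : ¬Critical σ s y x := by
  intro hyx
  obtain ⟨p, hp⟩ := hxy.2.1
  obtain ⟨a, b, rfl, hxa⟩ := List.eq_append_cons_of_mem (hxy.2.2 p hp)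
  have hya : y ∈ a := by simpa [hyx.1] using hyx.2.2 _ hp.truncate
  obtain ⟨c, d, rfl⟩ := List.append_of_mem hya
  have hp' : IsDiffPath σ s y (c ++ y :: (d ++ x :: b)) := by simpa using hp
  have hxc : x ∈ c := by simpa [hxy.1] using hxy.2.2 _ hp'.truncate
  exact hxa (by simp [hxc])

theorem trans (hxy : Critical σ s x y) (hyz : Critical σ s y z) : Critical σ s x z := by
  refine ⟨?_, hyz.2.1, fun p hp => ?_⟩
  · rintro rfl
    exact hxy.asymm hyz
  · obtain ⟨a, b, rfl⟩ := List.append_of_mem (hyz.2.2 p hp)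
    have hxa : x ∈ a ++ [y] := hxy.2.2 _ hp.truncate
    simp only [List.mem_append, List.mem_singleton] at hxa
    rcases hxa with hxa | rfl <;> simp [*]

theorem dset_ssubset (hxy : Critical σ s x y) : dset σ s y ⊂ dset σ s x := by
  refine ⟨?_, fun h => ?_⟩
  · rintro z (rfl | hyz)
    exacts [Or.inr hxy, Or.inr (hxy.trans hyz)]
  · rcases h (Or.inl rfl) with rfl | hyx
    exacts [hxy.1 rfl, hxy.asymm hyx]

theorem of_notMem_suffix {j : N} {a b : List N} (hp : IsDiffPath σ s j (a ++ x :: b))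
    (hzj : Critical σ s z j) (hzx : z ≠ x) (hzb : z ∉ b) : Critical σ s z x :=
  ⟨hzx, ⟨_, hp.truncate⟩, fun _ hq =>
    (List.mem_append.1 (hzj.2.2 _ (hp.splice hq))).resolve_right hzb⟩

end Critical

theorem critical_sequence_totally_ordered_general {N : Type}
    (σ : N → Finset N) (s j x y : N)
    (hx : Critical σ s x j) (hy : Critical σ s y j) (hxy : x ≠ y) :
    dset σ s y ⊂ dset σ s x ∨ dset σ s x ⊂ dset σ s y := by
  obtain ⟨p, hp⟩ := hx.2.1
  obtain ⟨a, b, rfl, hxb⟩ := List.eq_append_cons_last_of_mem (hx.2.2 p hp)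
  by_cases hyb : y ∈ b
  · obtain ⟨c, d, rfl⟩ := List.append_of_mem hyb
    have hp' : IsDiffPath σ s j ((a ++ x :: c) ++ y :: d) := by simpa using hp
    exact .inl (Critical.of_notMem_suffix hp' hx hxy fun hxd => hxb (by simp [hxd])).dset_ssubset
  · exact .inr (Critical.of_notMem_suffix hp hy hxy.symm hyb).dset_ssubset

/-- for any informed buyer `j`, any two distinct diffusion critical nodes
`x, y` of `j` are comparable: either `d_x ⊃ d_y` or `d_y ⊃ d_x` (strict inclusion of the
dependent sets).  Hence the diffusion critical nodes of `j`, together with `j`, form a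
sequence totally ordered by strict reverse inclusion of their dependent sets. -/
theorem critical_sequence_totally_ordered {N : Type}
    (σ : N → Finset N) (s j x y : N)
    (hj : Informed σ s j)
    (hx : Critical σ s x j) (hy : Critical σ s y j) (hxy : x ≠ y) :
    dset σ s y ⊂ dset σ s x ∨ dset σ s x ⊂ dset σ s y :=
  critical_sequence_totally_ordered_general σ s j x y hx hy hxy
end

section
/- The network VCG mechanism is not weakly budget balanced: on a line network with seller s at one end followed by l buyers, where the first l−1 buyers have valuation 0 and the last buyer has valuation 1, if all buyers act truthfully then the seller's total revenue under network VCG equals −(l−1), which is negative for l ≥ 2. -/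
/-- The highest reported valuation among the buyers in `B` (zero if `B` is empty). -/
noncomputable def maxBid (v : ℕ → ℝ) (B : Finset ℕ) : ℝ :=
  B.fold max 0 v

/-- Truthful diffusion on the line network `s = 0 — 1 — 2 — ⋯ — l`:
every agent passes the information to all her neighbors. -/
def lineσ (l : ℕ) : ℕ → Finset ℕ :=
  fun k => if k = 0 then {1} else if k < l then {k - 1, k + 1} else {l - 1}

/-- Valuations on the line: buyers `1, …, l−1` value the item at `0`, buyer `l` at `1`. -/
noncomputable def lineV (l : ℕ) : ℕ → ℝ :=
  fun k => if k = l then 1 else 0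

open Classical in
/-- `d_k` on the line network: buyer `k` together with all buyers of `{1,…,l}` having `k`
as a diffusion critical node. -/
noncomputable def lineD (l k : ℕ) : Finset ℕ :=
  (Finset.Icc 1 l).filter (fun j => j = k ∨ Critical (lineσ l) 0 k j)

/-!
Every diffusion step on the line moves at most one position to the right, so a path from the
seller `0` to the last buyer `l` cannot skip any intermediate buyer: every buyer `k < l` is
critical for `l`. Hence removing `d_k` always removes the only buyer with positive valuation,
so `W(a_{-d_k}) = 0` while `W(a) = 1`. Each of the `l - 1` losing buyers is therefore paid `1`
and the winner pays `0`.
-/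

namespace List

theorem mem_of_isChain_le_succ {k a j : ℕ} {p : List ℕ}
    (hp : IsChain (fun a b => b ≤ a + 1) (a :: p)) (hak : a ≤ k) (hj : j ∈ a :: p)
    (hkj : k ≤ j) : k ∈ a :: p := by
  induction p generalizing a with
  | nil =>
    obtain rfl : j = a := mem_singleton.mp hj
    obtain rfl : k = j := by omega
    exact mem_singleton_self k
  | cons b p ih =>
    obtain rfl | hak := hak.eq_or_lt
    · exact mem_cons_self
    have hjp : j ∈ b :: p := by
      rcases mem_cons.mp hj with rfl | hj
      · omega
      · exact hj
    obtain ⟨hba, hp⟩ := isChain_cons_cons.mp hp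
    exact mem_cons_of_mem a (ih hp (by omega) hjp)

end List

theorem maxBid_eq_zero {v : ℕ → ℝ} {B : Finset ℕ} (h : ∀ x ∈ B, v x ≤ 0) : maxBid v B = 0 :=
  le_antisymm ((Finset.fold_max_le _).mpr ⟨le_rfl, h⟩) ((Finset.le_fold_max _).mpr (Or.inl le_rfl))

theorem maxBid_eq_of_mem {v : ℕ → ℝ} {B : Finset ℕ} {c : ℝ} {x : ℕ} (hx : x ∈ B) (hvx : v x = c)
    (hc : 0 ≤ c) (h : ∀ y ∈ B, v y ≤ c) : maxBid v B = c :=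
  le_antisymm ((Finset.fold_max_le _).mpr ⟨hc, h⟩)
    ((Finset.le_fold_max _).mpr (Or.inr ⟨x, hx, hvx.ge⟩))

theorem le_succ_of_mem_lineσ {l a b : ℕ} (hb : b ∈ lineσ l a) : b ≤ a + 1 := by
  unfold lineσ at hb
  split_ifs at hb <;> simp only [Finset.mem_insert, Finset.mem_singleton] at hb <;> omega

theorem isDiffPath_lineσ_range (l : ℕ) : IsDiffPath (lineσ l) 0 l (List.range (l + 1)) := by
  refine ⟨by simp, by simp [List.range_succ_eq_map], by simp [List.getLast?_range], ?_⟩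
  show List.IsChain _ _
  rw [List.isChain_range_succ]
  intro m hm
  unfold lineσ
  split_ifs <;> simp; omega

theorem critical_lineσ {l k : ℕ} (hkl : k < l) : Critical (lineσ l) 0 k l := by
  refine ⟨hkl.ne, ⟨_, isDiffPath_lineσ_range l⟩, ?_⟩
  rintro p ⟨hne, hhead, hlast, hchain⟩
  obtain ⟨q, rfl⟩ : ∃ q, p = 0 :: q := by
    cases p with
    | nil => exact absurd rfl hne
    | cons a q => exact ⟨q, by simpa using hhead⟩
  have hl : l ∈ 0 :: q := List.mem_of_getLast? hlast
  exact List.mem_of_isChain_le_succ (hchain.imp fun _ _ => le_succ_of_mem_lineσ)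
    k.zero_le hl hkl.le

theorem mem_lineD_last {l k : ℕ} (hl : 1 ≤ l) (hk : k ≤ l) : l ∈ lineD l k := by
  simp only [lineD, Finset.mem_filter, Finset.mem_Icc]
  refine ⟨⟨hl, le_rfl⟩, ?_⟩
  obtain rfl | hkl := hk.eq_or_lt
  · exact Or.inl rfl
  · exact Or.inr (critical_lineσ hkl)

theorem maxBid_lineV_Icc {l : ℕ} (hl : 1 ≤ l) : maxBid (lineV l) (Finset.Icc 1 l) = 1 :=
  maxBid_eq_of_mem (Finset.mem_Icc.mpr ⟨hl, le_rfl⟩) (if_pos rfl) zero_le_one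
    fun y _ => by unfold lineV; split_ifs <;> norm_num

theorem maxBid_lineV_sdiff_lineD {l k : ℕ} (hl : 1 ≤ l) (hk : k ≤ l) :
    maxBid (lineV l) (Finset.Icc 1 l \ lineD l k) = 0 :=
  maxBid_eq_zero fun x hx => by
    have hxl : x ≠ l := by
      rintro rfl
      exact (Finset.mem_sdiff.mp hx).2 (mem_lineD_last hl hk)
    simp [lineV, hxl]

theorem lineVCG_revenue {l : ℕ} (hl : 1 ≤ l) :
    (∑ k ∈ Finset.Icc 1 l,
        (maxBid (lineV l) (Finset.Icc 1 l \ lineD l k)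
          - (maxBid (lineV l) (Finset.Icc 1 l)
              - (if k = l then lineV l k else 0))))
      = -((l : ℝ) - 1) := by
  have hpayment : ∀ k ∈ Finset.Icc 1 l,
      maxBid (lineV l) (Finset.Icc 1 l \ lineD l k)
          - (maxBid (lineV l) (Finset.Icc 1 l) - (if k = l then lineV l k else 0))
        = (if k = l then 1 else 0) - 1 := by
    intro k hk
    rw [maxBid_lineV_sdiff_lineD hl (Finset.mem_Icc.mp hk).2, maxBid_lineV_Icc hl]
    split_ifs with h <;> simp [lineV, h]
  rw [Finset.sum_congr rfl hpayment, Finset.sum_sub_distrib, Finset.sum_ite_eq']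
  simp [hl]

/-- network VCG is not weakly budget balanced.  On the line network with the
seller at one end followed by `l ≥ 2` buyers, where only the last buyer has valuation `1`
and all others have valuation `0`, under truthful actions the seller's revenue (the sum of
all VCG payments `W(a_{-d_i}) − (W(a) − π*_i(a)·v_i)`, the item going to buyer `l`) equals
`−(l−1) < 0`. -/
theorem vcg_not_weakly_budget_balanced (l : ℕ) (hl : 2 ≤ l) :
    (∑ k ∈ Finset.Icc 1 l,
        (maxBid (lineV l) (Finset.Icc 1 l \ lineD l k)
          - (maxBid (lineV l) (Finset.Icc 1 l)
              - (if k = l then lineV l k else 0))))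
      = -((l : ℝ) - 1)
    ∧ (∑ k ∈ Finset.Icc 1 l,
        (maxBid (lineV l) (Finset.Icc 1 l \ lineD l k)
          - (maxBid (lineV l) (Finset.Icc 1 l)
              - (if k = l then lineV l k else 0)))) < 0 := by
  have hrevenue := lineVCG_revenue (by omega : 1 ≤ l)
  refine ⟨hrevenue, ?_⟩
  rw [hrevenue]
  have : (2 : ℝ) ≤ l := by exact_mod_cast hl
  linarith
end

section
/- In any feasible action profile, for each informed buyer i the set d_i = {i} ∪ {j : i is a diffusion critical node of j} satisfies: if j ∈ d_i and i is a diffusion critical node of j, then d_j ⊆ d_i; i.e., the dependent sets are nested along the critical relation. -/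
/-- If `j` occurs on a diffusion path `p` to `k`, then some prefix of `p` is a
diffusion path to `j`. -/
lemma path_prefix_to_mem {N : Type} (σ : N → Finset N) (s k j : N) (p : List N)
    (hp : IsDiffPath σ s k p) (hj : j ∈ p) :
    ∃ q, IsDiffPath σ s j q ∧ q <+: p := by
  obtain ⟨l₁, l₂, rfl⟩ := List.append_of_mem hj
  refine ⟨l₁ ++ [j], ⟨by simp, ?_, by simp, ?_⟩, ⟨l₂, by simp⟩⟩
  · have := hp.2.1
    cases l₁ <;> simpa using this
  · exact hp.2.2.2.prefix ⟨l₂, by simp⟩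

/-- the dependent sets are nested along the critical relation: if `i` is a
diffusion critical node of `j` (so that `j ∈ d_i`), then `d_j ⊆ d_i`. -/
theorem dset_nested {N : Type}
    (σ : N → Finset N) (s i j : N)
    (hji : j ∈ dset σ s i) (h : Critical σ s i j) :
    dset σ s j ⊆ dset σ s i := by
  rintro k (rfl | hcjk)
  · exact Or.inr h
  · -- first, i ≠ k
    have hik : i ≠ k := by
      rintro rfl
      -- Critical σ s j i and Critical σ s i j : contradiction
      have key : ∀ n, ∀ p, IsDiffPath σ s j p → p.length ≤ n → False := by
        intro n
        induction n with
        | zero => intro p hp hl; exact hp.1 (List.length_eq_zero_iff.mp (Nat.le_zero.mp hl))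
        | succ n ih =>
          intro p hp hl
          have hi : i ∈ p := h.2.2 p hp
          obtain ⟨q, hq, hqp⟩ := path_prefix_to_mem σ s j i p hp hi
          have hjq : j ∈ q := hcjk.2.2 q hq
          obtain ⟨r, hr, hrq⟩ := path_prefix_to_mem σ s i j q hq hjq
          have hrne : r ≠ q := by
            intro heq
            rw [heq] at hr
            exact h.1 (Option.some_injective _ (hq.2.2.1 ▸ hr.2.2.1))
          have hlt : r.length < q.length :=
            lt_of_le_of_ne hrq.length_le (fun e => hrne (hrq.eq_of_length e))
          exact ih r hr (by have := hqp.length_le; omega)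
      obtain ⟨p, hp⟩ := h.2.1
      exact key p.length p hp le_rfl
    refine Or.inr ⟨hik, hcjk.2.1, fun p hp => ?_⟩
    have hjp : j ∈ p := hcjk.2.2 p hp
    obtain ⟨q, hq, hqp⟩ := path_prefix_to_mem σ s k j p hp hjp
    exact hqp.subset (h.2.2 q hq)
end
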